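/- Let C be an edge-connected configuration and let s ∈ C be a cut square, i.e. C \ {s} is not edge-connected. Then every connected component K of C \ {s} contains a square a such that C \ {a} is edge-connected (a stable square). -/

import Mathlib

/-! Basic notions for sliding-square reconfiguration. -/

abbrev Cell : Type := ℤ × ℤ

/-- Two cells differing by exactly 1 in exactly one coordinate. -/
def EdgeAdj (a b : Cell) : Prop := |a.1 - b.1| + |a.2 - b.2| = 1

/-- Two distinct cells differing by at most 1 in each coordinate. -/
def VertexAdj (a b : Cell) : Prop := a ≠ b ∧ |a.1 - b.1| ≤ 1 ∧ |a.2 - b.2| ≤ 1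

/-- Reachability inside a configuration via edge-adjacency. -/
def Reach (C : Finset Cell) (a b : Cell) : Prop :=
  Relation.ReflTransGen (fun u v => u ∈ C ∧ v ∈ C ∧ EdgeAdj u v) a b

/-- A configuration (finite nonempty set of cells) is edge-connected. -/
def EdgeConnected (C : Finset Cell) : Prop :=
  C.Nonempty ∧ ∀ a ∈ C, ∀ b ∈ C, Reach C a b

/-- Edge-connectivity for arbitrary sets of cells. -/
def SetEdgeConnected (S : Set Cell) : Prop :=
  S.Nonempty ∧ ∀ a ∈ S, ∀ b ∈ S,
    Relation.ReflTransGen (fun u v => u ∈ S ∧ v ∈ S ∧ EdgeAdj u v) a b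

def IsUnitVec (d : Cell) : Prop := d = (1, 0) ∨ d = (-1, 0) ∨ d = (0, 1) ∨ d = (0, -1)

def Orth (d e : Cell) : Prop := d.1 * e.1 + d.2 * e.2 = 0

/-- A slide move of a square from `c` to `c'`. -/
def SlideMove (C : Finset Cell) (c c' : Cell) : Prop :=
  c ∈ C ∧ c' ∉ C ∧ ∃ d, IsUnitVec d ∧ c' = c + d ∧
    ∃ e, IsUnitVec e ∧ Orth d e ∧ c + e ∈ C ∧ c + d + e ∈ C

/-- A convex transition of a square from `c` to `c'`. -/
def ConvexMove (C : Finset Cell) (c c' : Cell) : Prop :=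
  c ∈ C ∧ c' ∉ C ∧ ∃ d e, IsUnitVec d ∧ IsUnitVec e ∧ Orth d e ∧
    c' = c + d + e ∧ Xor' (c + d ∈ C) (c + e ∈ C)

/-- The configuration resulting from moving the square at `c` to `c'`. -/
def ApplyMove (C : Finset Cell) (c c' : Cell) : Finset Cell := insert c' (C.erase c)

/-- One move (slide or convex transition). -/
def MoveStep (C C' : Finset Cell) : Prop :=
  ∃ c c', (SlideMove C c c' ∨ ConvexMove C c c') ∧ C' = ApplyMove C c c'

/-- A reconfiguration sequence of `k` moves: every configuration is edge-connected. -/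
def ReconfigSeq (k : ℕ) (f : ℕ → Finset Cell) : Prop :=
  (∀ i < k, MoveStep (f i) (f (i + 1))) ∧ ∀ i ≤ k, EdgeConnected (f i)

noncomputable def minX (C : Finset Cell) : ℤ := sInf (Prod.fst '' (C : Set Cell))
noncomputable def maxX (C : Finset Cell) : ℤ := sSup (Prod.fst '' (C : Set Cell))
noncomputable def minY (C : Finset Cell) : ℤ := sInf (Prod.snd '' (C : Set Cell))
noncomputable def maxY (C : Finset Cell) : ℤ := sSup (Prod.snd '' (C : Set Cell))

/-- Number of columns of the bounding box. -/
noncomputable def bwidth (C : Finset Cell) : ℕ := (maxX C - minX C + 1).toNat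
/-- Number of rows of the bounding box. -/
noncomputable def bheight (C : Finset Cell) : ℕ := (maxY C - minY C + 1).toNat
/-- Perimeter of the bounding box. -/
noncomputable def perim (C : Finset Cell) : ℕ := 2 * (bwidth C + bheight C)

/-- The cells of the bounding box of `C`. -/
def boundingBox (C : Finset Cell) : Set Cell :=
  {q | minX C ≤ q.1 ∧ q.1 ≤ maxX C ∧ minY C ≤ q.2 ∧ q.2 ≤ maxY C}

/-- The leftmost square of the bottom row. -/
noncomputable def rootSquare (C : Finset Cell) : Cell :=
  (sInf {x : ℤ | ((x, minY C) : Cell) ∈ C}, minY C)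

/-- The bottom-left cell of the bounding box. -/
noncomputable def originCell (C : Finset Cell) : Cell := (minX C, minY C)

def XYMonotone (C : Finset Cell) : Prop :=
  ∀ q ∈ C, (minX C ≤ q.1 - 1 → ((q.1 - 1, q.2) : Cell) ∈ C) ∧
    (minY C ≤ q.2 - 1 → ((q.1, q.2 - 1) : Cell) ∈ C)

def translateConf (C : Finset Cell) (v : Cell) : Finset Cell := C.image (· + v)

/-- `s` has degree 1 in the edge-adjacency graph of `C`. -/
def DegreeOne (C : Finset Cell) (s : Cell) : Prop :=
  s ∈ C ∧ ∃! t, t ∈ C ∧ EdgeAdj s t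

/-- A simple cycle of length at least 4 in the edge-adjacency graph of `C`. -/
def IsCycleIn (C : Finset Cell) (σ : List Cell) : Prop :=
  4 ≤ σ.length ∧ σ.Nodup ∧ (∀ s ∈ σ, s ∈ C) ∧ List.Chain' EdgeAdj σ ∧
  ∀ a b, σ.head? = some a → σ.getLast? = some b → EdgeAdj b a

/-- Vertex-adjacency avoiding a set `S`. -/
def OffAdj (S : Set Cell) (a b : Cell) : Prop := VertexAdj a b ∧ a ∉ S ∧ b ∉ S

/-- The vertex-connected component of `q` in the complement of `S`. -/
def emptyComp (S : Set Cell) (q : Cell) : Set Cell :=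
  {p | Relation.ReflTransGen (OffAdj S) q p}

/-- `q` lies in the closed region bounded by the cycle `σ`. -/
def EnclosedBy (σ : List Cell) (q : Cell) : Prop :=
  q ∈ σ ∨ (emptyComp {s | s ∈ σ} q).Finite

/-- The set of cells bounded by (and including) the cycle `σ`. -/
def regionOf (σ : List Cell) : Set Cell := {q | EnclosedBy σ q}

/-- The squares of `C` enclosed by cycle `σ`, together with loose squares. -/
def chunkWithCycle (C : Finset Cell) (σ : List Cell) : Set Cell :=
  {s | s ∈ C ∧ EnclosedBy σ s} ∪
  {s | DegreeOne C s ∧ ∃ t, t ∈ C ∧ EnclosedBy σ t ∧ EdgeAdj s t}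

/-- A chunk: an inclusion-maximal set of squares bounded by a simple cycle of
length at least `4`, together with its loose squares. -/
def IsChunk (C : Finset Cell) (K : Set Cell) : Prop :=
  (∃ σ, IsCycleIn C σ ∧ K = chunkWithCycle C σ) ∧
  ∀ K', (∃ σ, IsCycleIn C σ ∧ K' = chunkWithCycle C σ) → K ⊆ K' → K' = K

/-- `σ` is a boundary cycle of the chunk `K`. -/
def BoundaryCycle (C : Finset Cell) (K : Set Cell) (σ : List Cell) : Prop :=
  IsChunk C K ∧ IsCycleIn C σ ∧ K = chunkWithCycle C σ

def InSomeChunk (C : Finset Cell) (s : Cell) : Prop := ∃ K, IsChunk C K ∧ s ∈ K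

def LinkCells (C : Finset Cell) : Set Cell := {s | s ∈ C ∧ ¬ InSomeChunk C s}

/-- A link: a connected component of the squares not contained in any chunk. -/
def IsLink (C : Finset Cell) (L : Set Cell) : Prop :=
  ∃ s ∈ LinkCells C, L = {t | t ∈ LinkCells C ∧
    Relation.ReflTransGen (fun u v => u ∈ LinkCells C ∧ v ∈ LinkCells C ∧ EdgeAdj u v) s t}

/-- A vertex of the component tree: a chunk or a link. -/
def IsComponent (C : Finset Cell) (K : Set Cell) : Prop := IsChunk C K ∨ IsLink C K

/-- Adjacency of components in the component tree. -/
def CompAdj (K K' : Set Cell) : Prop :=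
  K ≠ K' ∧ ((K ∩ K').Nonempty ∨ ∃ s ∈ K, ∃ t ∈ K', EdgeAdj s t)

/-- A leaf of the component tree rooted at the component of the root square. -/
def IsLeafComponent (C : Finset Cell) (K : Set Cell) : Prop :=
  IsComponent C K ∧ {K' | IsComponent C K' ∧ CompAdj K K'}.Subsingleton ∧
  (rootSquare C ∉ K ∨ ∀ K', IsComponent C K' → K' = K)

def IsLeafChunk (C : Finset Cell) (K : Set Cell) : Prop :=
  IsChunk C K ∧ IsLeafComponent C K

/-- A hole: a finite maximal vertex-connected set of empty cells. -/
def IsHole (C : Finset Cell) (H : Set Cell) : Prop :=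
  ∃ q, q ∉ C ∧ H = emptyComp (C : Set Cell) q ∧ H.Finite

/-- A cell of the outside: the infinite vertex-connected set of empty cells. -/
def OutsideCell (C : Finset Cell) (q : Cell) : Prop :=
  q ∉ C ∧ (emptyComp (C : Set Cell) q).Infinite

/-- A chunk is solid if it encloses no hole. -/
def IsSolidChunk (C : Finset Cell) (K : Set Cell) : Prop :=
  ∀ σ, BoundaryCycle C K σ → ∀ q, EnclosedBy σ q → q ∈ C

/-- An LM-move: an S- or W-slide, or an SW-, WS-, NW- or WN-convex transition. -/
def IsLMMove (C : Finset Cell) (c c' : Cell) : Prop :=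
  (SlideMove C c c' ∧ (c' - c = ((0, -1) : Cell) ∨ c' - c = ((-1, 0) : Cell))) ∨
  (ConvexMove C c c' ∧ (c' - c = ((-1, -1) : Cell) ∨ c' - c = ((-1, 1) : Cell)))

/-- After the move of `c` to `c'`, all squares of `K` lie in a single chunk. -/
def SingleChunkAfter (C : Finset Cell) (K : Set Cell) (c c' : Cell) : Prop :=
  ∃ K', IsChunk (ApplyMove C c c') K' ∧ insert c' (K \ {c}) ⊆ K'

/-- A valid LM-move of a square of the chunk `K`. -/
def ValidLMMove (C : Finset Cell) (K : Set Cell) (c c' : Cell) : Prop :=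
  c ∈ K ∧ IsLMMove C c c' ∧ c' ∈ boundingBox C ∧ SingleChunkAfter C K c c'

def IsTopCorner (C : Finset Cell) (σ : List Cell) (q : Cell) : Prop :=
  q ∉ C ∧ q + (0, 1) ∈ σ ∧ q + (1, 1) ∈ σ ∧ q + (1, 0) ∈ σ

def IsBottomCorner (C : Finset Cell) (σ : List Cell) (q : Cell) : Prop :=
  q ∉ C ∧ q + (0, -1) ∈ σ ∧ q + (1, -1) ∈ σ ∧ q + (1, 0) ∈ σ

/-- `b₁ b₂ b₃` occur consecutively (in some direction) on the cycle `σ`. -/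
def CyclicConsecutive (σ : List Cell) (b₁ b₂ b₃ : Cell) : Prop :=
  ∃ n, (σ.rotate n).take 3 = [b₁, b₂, b₃] ∨ (σ.rotate n).take 3 = [b₃, b₂, b₁]

/-- The two slide moves of a corner move filling the corner `q`. -/
def CornerMoveSeq (C : Finset Cell) (q b₁ b₂ b₃ : Cell) (C' : Finset Cell) : Prop :=
  ∃ f, (f = b₁ ∨ f = b₃) ∧ SlideMove C f q ∧ SlideMove (ApplyMove C f q) b₂ f ∧
    C' = ApplyMove (ApplyMove C f q) b₂ f

/-- A valid corner move at corner `q` with neighbors `b₁ b₂ b₃` on the boundary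
cycle `σ` of chunk `K`, resulting in `C'`. -/
def ValidCornerMoveAt (C : Finset Cell) (K : Set Cell) (σ : List Cell)
    (q b₁ b₂ b₃ : Cell) (C' : Finset Cell) : Prop :=
  BoundaryCycle C K σ ∧ CyclicConsecutive σ b₁ b₂ b₃ ∧ CornerMoveSeq C q b₁ b₂ b₃ C' ∧
  ∃ K', IsChunk C' K' ∧ insert q (K \ {b₂}) ⊆ K'

def AdmitsValidCornerMove (C : Finset Cell) (K : Set Cell) : Prop :=
  ∃ σ q C',
    (IsTopCorner C σ q ∧
      ValidCornerMoveAt C K σ q (q + (0, 1)) (q + (1, 1)) (q + (1, 0)) C') ∨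
    (IsBottomCorner C σ q ∧
      ValidCornerMoveAt C K σ q (q + (0, -1)) (q + (1, -1)) (q + (1, 0)) C')

/-- A loose square of some chunk. -/
def LooseSquare (C : Finset Cell) (s : Cell) : Prop :=
  DegreeOne C s ∧ ∃ K, IsChunk C K ∧ s ∈ K

/-- Net effect of a chain move of a bottom-row square `s` of the chunk `K`,
where `(x, minY C)` is the first empty bottom-row cell closer to the origin. -/
def ChainMoveBottom (C : Finset Cell) (K : Set Cell) (s : Cell) (x : ℤ)
    (C' : Finset Cell) : Prop :=
  s ∈ K ∧ s ∈ C ∧ s.2 = minY C ∧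
  ConvexMove C s (s.1 - 1, s.2 - 1) ∧ SingleChunkAfter C K s (s.1 - 1, s.2 - 1) ∧
  minX C ≤ x ∧ x < s.1 ∧ ((x, minY C) : Cell) ∉ C ∧
  (∀ x', x < x' → x' < s.1 → ((x', minY C) : Cell) ∈ C) ∧
  ((¬ LooseSquare C (x + 1, minY C) ∧ C' = ApplyMove C s (x, minY C)) ∨
   (LooseSquare C (x + 1, minY C) ∧ C' = insert ((x + 1, minY C + 1) : Cell) (C.erase s)))

/-- Net effect of a chain move of a leftmost-column square `s` (mirrored case). -/
def ChainMoveLeft (C : Finset Cell) (K : Set Cell) (s : Cell) (y : ℤ)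
    (C' : Finset Cell) : Prop :=
  s ∈ K ∧ s ∈ C ∧ s.1 = minX C ∧
  ConvexMove C s (s.1 - 1, s.2 - 1) ∧ SingleChunkAfter C K s (s.1 - 1, s.2 - 1) ∧
  minY C ≤ y ∧ y < s.2 ∧ ((minX C, y) : Cell) ∉ C ∧
  (∀ y', y < y' → y' < s.2 → ((minX C, y') : Cell) ∈ C) ∧
  ((¬ LooseSquare C (minX C, y + 1) ∧ C' = ApplyMove C s (minX C, y)) ∨
   (LooseSquare C (minX C, y + 1) ∧ C' = insert ((minX C + 1, y + 1) : Cell) (C.erase s)))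

def AdmitsChainMove (C : Finset Cell) (K : Set Cell) : Prop :=
  ∃ C', (∃ s x, ChainMoveBottom C K s x C') ∨ (∃ s y, ChainMoveLeft C K s y C')

def ValidLMStep (C C' : Finset Cell) : Prop :=
  ∃ K c c', IsLeafChunk C K ∧ ValidLMMove C K c c' ∧ C' = ApplyMove C c c'

def ValidCornerStep (C C' : Finset Cell) : Prop :=
  ∃ K, IsLeafChunk C K ∧
    (∃ σ q,
      (IsTopCorner C σ q ∧
        ValidCornerMoveAt C K σ q (q + (0, 1)) (q + (1, 1)) (q + (1, 0)) C') ∨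
      (IsBottomCorner C σ q ∧
        ValidCornerMoveAt C K σ q (q + (0, -1)) (q + (1, -1)) (q + (1, 0)) C'))

def ChainStep (C C' : Finset Cell) : Prop :=
  ∃ K, IsLeafChunk C K ∧
    ((∃ s x, ChainMoveBottom C K s x C') ∨ (∃ s y, ChainMoveLeft C K s y C'))

/-- One step of the compaction procedure. -/
def CompactionStep (C C' : Finset Cell) : Prop :=
  ValidLMStep C C' ∨ ValidCornerStep C C' ∨ ChainStep C C'

/-- Every nonempty row is a contiguous interval starting at the minimum column. -/
def IsLeftAlignedHistogram (S : Set Cell) : Prop :=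
  ∃ x₀ : ℤ, (∀ c ∈ S, x₀ ≤ c.1) ∧
    ∀ c ∈ S, ∀ x : ℤ, x₀ ≤ x → x ≤ c.1 → ((x, c.2) : Cell) ∈ S

/-- A connector: a chunk square edge-adjacent to a square in a link or another chunk. -/
def IsConnector (C : Finset Cell) (s : Cell) : Prop :=
  (∃ K, IsChunk C K ∧ s ∈ K) ∧
  ∃ t, t ∈ C ∧ EdgeAdj s t ∧
    ((∃ L, IsLink C L ∧ t ∈ L) ∨ (∃ K', IsChunk C K' ∧ t ∈ K' ∧ s ∉ K'))

/-- The squares of the descendant components of the cut square `s`. -/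
def Descendants (C : Finset Cell) (s : Cell) : Set Cell :=
  {t | t ∈ C.erase s ∧ ¬ Reach (C.erase s) t (rootSquare C)}

def score (C : Finset Cell) : ℤ := ∑ c ∈ C, (2 * c.1 + c.2)

noncomputable def regionTop (R : Set Cell) : ℤ := sSup (Prod.snd '' R)
noncomputable def regionLeft (R : Set Cell) : ℤ := sInf (Prod.fst '' R)
def rowOf (R : Set Cell) (y : ℤ) : Set ℤ := {x | ((x, y) : Cell) ∈ R}
/-! Auxiliary machinery for STATEMENT 15. -/

/-- Reachability in exactly `n` steps. -/
def ReachN (C : Finset Cell) (a : Cell) : ℕ → Cell → Prop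
  | 0, b => b = a
  | n+1, b => ∃ c, ReachN C a n c ∧ (c ∈ C ∧ b ∈ C ∧ EdgeAdj c b)

lemma reach_exists_reachN {C : Finset Cell} {a b : Cell} (h : Reach C a b) :
    ∃ n, ReachN C a n b := by
  induction h with
  | refl => exact ⟨0, rfl⟩
  | tail _ hstep ih =>
    obtain ⟨n, hn⟩ := ih
    exact ⟨n + 1, _, hn, hstep⟩

lemma edgeAdj_symm {a b : Cell} (h : EdgeAdj a b) : EdgeAdj b a := by
  unfold EdgeAdj at *
  rw [abs_sub_comm b.1, abs_sub_comm b.2]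
  exact h

lemma reach_symm {C : Finset Cell} {a b : Cell} (h : Reach C a b) : Reach C b a := by
  refine (@Relation.ReflTransGen.stdSymm _ _ ⟨?_⟩).symm _ _ h
  rintro u v ⟨hu, hv, hadj⟩
  exact ⟨hv, hu, edgeAdj_symm hadj⟩

/-- Distance from `a` to `b` in `C`. -/
noncomputable def cdist (C : Finset Cell) (a b : Cell) : ℕ := sInf {n | ReachN C a n b}

/-- every connected component of `C \ {s}` for a cut square `s`
contains a stable square. -/
theorem stable_square_in_component (C : Finset Cell) (hC : EdgeConnected C)
    (s : Cell) (hs : s ∈ C) (hcut : ¬ EdgeConnected (C.erase s))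
    (t : Cell) (ht : t ∈ C.erase s)
    (K : Set Cell) (hK : K = {u : Cell | u ∈ C.erase s ∧ Reach (C.erase s) t u}) :
    ∃ a ∈ K, EdgeConnected (C.erase a) := by
  classical
  -- the component as a finset
  set Kf : Finset Cell := (C.erase s).filter (fun u => Reach (C.erase s) t u) with hKf
  have hKK : ∀ u, u ∈ Kf ↔ u ∈ K := by
    intro u; simp [hKf, hK, Finset.mem_filter]
  have hne : Kf.Nonempty :=
    ⟨t, by rw [hKf, Finset.mem_filter]; exact ⟨ht, Relation.ReflTransGen.refl⟩⟩
  -- distance from s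
  set d : Cell → ℕ := fun b => cdist C s b with hd
  obtain ⟨a, haK, hamax⟩ := Kf.exists_max_image d hne
  have haK' : a ∈ C.erase s := (Finset.mem_filter.mp haK).1
  have haC : a ∈ C := Finset.mem_of_mem_erase haK'
  have hans : a ≠ s := Finset.ne_of_mem_erase haK'
  have hsC' : s ∈ C.erase a := Finset.mem_erase.mpr ⟨fun h => hans h.symm, hs⟩
  -- every b ∈ C is reachable from s, so the distance set is nonempty and attained
  have hreachset : ∀ b ∈ C, ReachN C s (d b) b := by
    intro b hb
    have : ∃ n, ReachN C s n b := reach_exists_reachN (hC.2 s hs b hb)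
    exact Nat.sInf_mem this
  have hds : d s = 0 := by
    have h0 : ReachN C s 0 s := rfl
    exact Nat.le_zero.mp (Nat.sInf_le h0)
  -- main claim: s reaches every b ≠ a in C.erase a
  have main : ∀ n, ∀ b ∈ C, b ≠ a → d b ≤ n → Reach (C.erase a) s b := by
    intro n
    induction n with
    | zero =>
      intro b hb hba hdb
      have hdb0 : d b = 0 := Nat.le_zero.mp hdb
      have := hreachset b hb
      rw [hdb0] at this
      -- ReachN C s 0 b means b = s
      have hbs : b = s := this
      rw [hbs]; exact Relation.ReflTransGen.refl
    | succ n ih =>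
      intro b hb hba hdb
      rcases Nat.lt_or_ge (d b) (n + 1) with hlt | hge
      · exact ih b hb hba (Nat.lt_succ_iff.mp hlt)
      · have hdbn : d b = n + 1 := le_antisymm hdb hge
        have hRb := hreachset b hb
        rw [hdbn] at hRb
        obtain ⟨c, hRc, hcC, hbC, hadj⟩ := hRb
        have hdc : d c ≤ n := Nat.sInf_le hRc
        have hbns : b ≠ s := by
          intro h; rw [h, hds] at hdbn; exact (Nat.succ_ne_zero n) hdbn.symm
        have hcna : c ≠ a := by
          intro hca
          subst hca
          -- b is a neighbor of a in C.erase s, hence b ∈ K, so d b ≤ d a ≤ n < d b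
          have hbK : b ∈ Kf := by
            rw [hKf, Finset.mem_filter]
            refine ⟨Finset.mem_erase.mpr ⟨hbns, hbC⟩, ?_⟩
            have hta : Reach (C.erase s) t c := (Finset.mem_filter.mp haK).2
            exact hta.tail ⟨haK', Finset.mem_erase.mpr ⟨hbns, hbC⟩, hadj⟩
          have : d b ≤ d c := hamax b hbK
          omega
        have hRsc : Reach (C.erase a) s c := ih c hcC hcna hdc
        exact hRsc.tail ⟨Finset.mem_erase.mpr ⟨hcna, hcC⟩,
          Finset.mem_erase.mpr ⟨hba, hbC⟩, hadj⟩
  refine ⟨a, (hKK a).mp haK, ⟨s, hsC'⟩, ?_⟩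
  intro u hu v hv
  have hu' : u ∈ C := Finset.mem_of_mem_erase hu
  have hv' : v ∈ C := Finset.mem_of_mem_erase hv
  have hsu : Reach (C.erase a) s u :=
    main (d u) u hu' (Finset.ne_of_mem_erase hu) le_rfl
  have hsv : Reach (C.erase a) s v :=
    main (d v) v hv' (Finset.ne_of_mem_erase hv) le_rfl
  exact (reach_symm hsu).trans hsv
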